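/- arXiv:2112.10283 — 4 statements merged into one kernel-verified Lean document; each statement's English description precedes it below -/
import Mathlib

section
/- Every group containing an abelian subgroup of finite index contains a characteristic abelian subgroup of finite index (i.e. an abelian finite-index subgroup invariant under all automorphisms of the group). -/
open Subgroup

/-- The FC-center: elements with finite-index centralizer. -/
def fcCenter (G : Type*) [Group G] : Subgroup G where
  carrier := {g | (Subgroup.centralizer {g}).FiniteIndex}
  one_mem' := by
    refine Subgroup.finiteIndex_of_le (H := ⊤) ?_
    intro x _
    simp [Subgroup.mem_centralizer_singleton_iff]
  mul_mem' := by
    intro a b ha hb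
    haveI : (Subgroup.centralizer {a}).FiniteIndex := ha
    haveI : (Subgroup.centralizer {b}).FiniteIndex := hb
    refine Subgroup.finiteIndex_of_le
      (H := Subgroup.centralizer {a} ⊓ Subgroup.centralizer {b}) ?_
    intro x hx
    have ha' : x * a = a * x := Subgroup.mem_centralizer_singleton_iff.mp hx.1
    have hb' : x * b = b * x := Subgroup.mem_centralizer_singleton_iff.mp hx.2
    rw [Subgroup.mem_centralizer_singleton_iff, ← mul_assoc, ha', mul_assoc, hb',
      ← mul_assoc]
  inv_mem' := by
    intro a ha
    haveI : (Subgroup.centralizer {a}).FiniteIndex := ha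
    refine Subgroup.finiteIndex_of_le (H := Subgroup.centralizer {a}) ?_
    intro x hx
    have hx' : x * a = a * x := Subgroup.mem_centralizer_singleton_iff.mp hx
    rw [Subgroup.mem_centralizer_singleton_iff]
    exact Commute.inv_right hx'

lemma mem_fcCenter_iff {G : Type*} [Group G] {g : G} :
    g ∈ fcCenter G ↔ (Subgroup.centralizer {g}).FiniteIndex := Iff.rfl

lemma fcCenter_comap_eq {G : Type*} [Group G] (φ : G ≃* G) :
    (fcCenter G).comap φ.toMonoidHom = fcCenter G := by
  have key : ∀ (ψ : G ≃* G) (g : G),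
      (Subgroup.centralizer {ψ g}).comap ψ.toMonoidHom = Subgroup.centralizer {g} := by
    intro ψ g
    ext x
    simp only [Subgroup.mem_comap, Subgroup.mem_centralizer_singleton_iff,
      MulEquiv.coe_toMonoidHom]
    constructor
    · intro h
      apply ψ.injective
      simpa using h
    · intro h
      rw [← map_mul, ← map_mul, h]
  have idx : ∀ (ψ : G ≃* G) (g : G),
      (Subgroup.centralizer {g}).index = (Subgroup.centralizer {ψ g}).index := by
    intro ψ g
    have h1 := Subgroup.index_comap_of_surjective
      (H := Subgroup.centralizer {ψ g}) (f := ψ.toMonoidHom) ψ.surjective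
    rw [key ψ g] at h1
    exact h1
  ext g
  simp only [Subgroup.mem_comap, mem_fcCenter_iff, MulEquiv.coe_toMonoidHom]
  constructor
  · intro h
    exact ⟨by rw [idx φ g]; exact h.index_ne_zero⟩
  · intro h
    exact ⟨by rw [← idx φ g]; exact h.index_ne_zero⟩

theorem exists_characteristic_abelian_of_finiteIndex_abelian
    {G : Type*} [Group G] (H : Subgroup G) [H.FiniteIndex]
    (hH : ∀ a ∈ H, ∀ b ∈ H, a * b = b * a) :
    ∃ K : Subgroup G, K.Characteristic ∧ K.FiniteIndex ∧
      ∀ a ∈ K, ∀ b ∈ K, a * b = b * a := by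
  classical
  set Δ : Subgroup G := fcCenter G with hΔ
  -- H ≤ Δ
  have hHΔ : H ≤ Δ := by
    intro h hh
    refine Subgroup.finiteIndex_of_le (H := H) ?_
    intro x hx
    rw [Subgroup.mem_centralizer_singleton_iff]
    exact hH x hx h hh
  have hmem : ∀ (φ : G ≃* G) (g : G), φ g ∈ Δ ↔ g ∈ Δ := by
    intro φ g
    have h2 := SetLike.ext_iff.mp (fcCenter_comap_eq φ) g
    exact Iff.trans (Subgroup.mem_comap (f := φ.toMonoidHom)).symm h2
  set K : Subgroup G := Subgroup.centralizer (Δ : Set G) ⊓ Δ with hK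
  refine ⟨K, ?_, ?_, ?_⟩
  · -- characteristic
    rw [Subgroup.characteristic_iff_comap_eq]
    intro φ
    ext x
    rw [Subgroup.mem_comap]
    simp only [hK, Subgroup.mem_inf, Subgroup.mem_centralizer_iff, SetLike.mem_coe,
      MulEquiv.coe_toMonoidHom]
    constructor
    · rintro ⟨hc, hd⟩
      refine ⟨fun d hdΔ => ?_, (hmem φ x).mp hd⟩
      have := hc (φ d) ((hmem φ d).mpr hdΔ)
      apply φ.injective
      simpa using this
    · rintro ⟨hc, hd⟩
      refine ⟨fun d hdΔ => ?_, (hmem φ x).mpr hd⟩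
      have hd' : φ.symm d ∈ Δ := by
        rw [← hmem φ (φ.symm d)]
        simpa using hdΔ
      have h3 := hc (φ.symm d) hd'
      have h4 := congrArg φ h3
      simpa using h4
  · -- finite index
    haveI : (H.subgroupOf Δ).FiniteIndex := inferInstance
    haveI : Finite (Δ ⧸ H.subgroupOf Δ) := inferInstance
    set Z : Subgroup G :=
      H ⊓ ⨅ q : Δ ⧸ H.subgroupOf Δ, Subgroup.centralizer {((q.out : Δ) : G)} with hZ
    haveI : (⨅ q : Δ ⧸ H.subgroupOf Δ, Subgroup.centralizer {((q.out : Δ) : G)}).FiniteIndex :=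
      Subgroup.finiteIndex_iInf fun q => (q.out : Δ).2
    haveI : Z.FiniteIndex := by rw [hZ]; infer_instance
    refine Subgroup.finiteIndex_of_le (H := Z) ?_
    intro z hz
    obtain ⟨hzH, hzC'⟩ := Subgroup.mem_inf.mp hz
    have hzC := fun q => Subgroup.mem_iInf.mp hzC' q
    rw [hK, Subgroup.mem_inf]
    refine ⟨?_, hHΔ hzH⟩
    rw [Subgroup.mem_centralizer_iff]
    intro d hdΔ
    set dd : Δ := ⟨d, hdΔ⟩ with hdd
    obtain ⟨h, hh⟩ := QuotientGroup.mk_out_eq_mul (H.subgroupOf Δ) dd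
    set q : Δ ⧸ H.subgroupOf Δ := QuotientGroup.mk dd with hq
    have hd_eq : d = ((q.out : Δ) : G) * (((h : Δ) : G))⁻¹ := by
      have h5 : ((q.out : Δ) : G) = d * ((h : Δ) : G) := by
        rw [hh]; rfl
      rw [h5, mul_assoc, mul_inv_cancel, mul_one]
    have c1 : Commute z ((q.out : Δ) : G) :=
      Subgroup.mem_centralizer_singleton_iff.mp (hzC q)
    have c2 : Commute z ((h : Δ) : G) := hH z hzH _ h.2
    have : Commute z d := by
      rw [hd_eq]
      exact c1.mul_right c2.inv_right
    exact this.symm.eq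
  · -- abelian
    intro a ha b hb
    obtain ⟨haC, haΔ⟩ := Subgroup.mem_inf.mp ha
    obtain ⟨hbC, hbΔ⟩ := Subgroup.mem_inf.mp hb
    exact (Subgroup.mem_centralizer_iff.mp haC b hbΔ).symm
end

section
/- A compact Hausdorff topological abelian group in which every element has finite order has finite exponent: there exists n ≥ 1 with n·x = 0 for all x. -/
/-!
The closed subgroups `{x | n • x = 0}`, `n ≥ 1`, cover the compact (hence Baire) group `G`, so
one of them has nonempty interior and is therefore open. An open subgroup of a compact group has
finite index `k`, and `k • x` lies in it for every `x`, so `n * k` kills `G`.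
-/

section

variable {G : Type*} [AddCommGroup G]

theorem AddSubgroup.exponentExists_of_nsmul_eq_zero (H : AddSubgroup G) [Finite (G ⧸ H)]
    {n : ℕ} (hn : 0 < n) (hH : ∀ x ∈ H, n • x = 0) : AddMonoid.ExponentExists G :=
  ⟨n * H.index, Nat.mul_pos hn (Nat.pos_of_ne_zero H.index_ne_zero_of_finite), fun x => by
    rw [mul_comm, mul_nsmul]
    exact hH _ (H.nsmul_index_mem x)⟩

variable [TopologicalSpace G] [IsTopologicalAddGroup G] [T2Space G]

theorem isClosed_ker_nsmulAddMonoidHom (n : ℕ) :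
    IsClosed ((nsmulAddMonoidHom n : G →+ G).ker : Set G) :=
  isClosed_eq (continuous_id.nsmul n) continuous_const

theorem IsAddTorsion.exists_isOpen_ker_nsmulAddMonoidHom [BaireSpace G]
    (tG : IsAddTorsion G) :
    ∃ n : ℕ, 0 < n ∧ IsOpen ((nsmulAddMonoidHom n : G →+ G).ker : Set G) := by
  have hcover : ⋃ n : ℕ+, ((nsmulAddMonoidHom (n : ℕ) : G →+ G).ker : Set G) = .univ := by
    refine Set.eq_univ_of_forall fun x => ?_
    obtain ⟨n, hn, hx⟩ := isOfFinAddOrder_iff_nsmul_eq_zero.mp (tG x)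
    exact Set.mem_iUnion.mpr ⟨⟨n, hn⟩, hx⟩
  obtain ⟨n, x, hx⟩ :=
    nonempty_interior_of_iUnion_of_closed (fun n => isClosed_ker_nsmulAddMonoidHom _) hcover
  exact ⟨n, n.pos, AddSubgroup.isOpen_of_mem_nhds _ (mem_interior_iff_mem_nhds.mp hx)⟩

end

theorem compact_torsion_abelian_group_bounded_exponent
    {G : Type*} [AddCommGroup G] [TopologicalSpace G] [IsTopologicalAddGroup G]
    [CompactSpace G] [T2Space G]
    (htor : ∀ x : G, ∃ n : ℕ, 0 < n ∧ n • x = 0) :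
    ∃ n : ℕ, 0 < n ∧ ∀ x : G, n • x = 0 := by
  have tG : IsAddTorsion G := fun x => isOfFinAddOrder_iff_nsmul_eq_zero.mpr (htor x)
  obtain ⟨n, hn, hopen⟩ := IsAddTorsion.exists_isOpen_ker_nsmulAddMonoidHom tG
  have : Finite (G ⧸ (nsmulAddMonoidHom n : G →+ G).ker) :=
    AddSubgroup.quotient_finite_of_isOpen _ hopen
  exact (nsmulAddMonoidHom n).ker.exponentExists_of_nsmul_eq_zero hn fun _ => id
end

section
/- A pure subgroup of finite exponent of an abelian group is a direct summand: if B ≤ A is pure and n·B = 0 for some n ≥ 1, then there is a subgroup C ≤ A with A = B ⊕ C. -/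
open AddSubgroup

private def zsmulHom {A : Type*} [AddCommGroup A] (k : ℤ) : A →+ A :=
  AddMonoidHom.mk' (k • ·) (fun a b => smul_add k a b)

/-- The prime-socle case: if `D ≤ E`, `p` prime, and no nonzero element of `D`
is `p` times an element of `E`, then `D` is a direct summand of `E`. -/
private lemma aux_prime_case {A : Type*} [AddCommGroup A] (p : ℕ) (hp : p.Prime)
    (D E : AddSubgroup A) (hDE : D ≤ E)
    (hdiv : ∀ x ∈ D, ∀ y ∈ E, (p : ℤ) • y = x → x = 0) :
    ∃ C ≤ E, D ⊓ C = ⊥ ∧ D ⊔ C = E := by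
  set pE : AddSubgroup A := E.map (zsmulHom (p : ℤ)) with hpE
  have hpE_le : pE ≤ E := by
    rintro x ⟨y, hy, rfl⟩
    exact zsmul_mem hy _
  set S : Set (AddSubgroup A) := {C | pE ≤ C ∧ C ≤ E ∧ D ⊓ C = ⊥} with hS
  have hpES : pE ∈ S := by
    refine ⟨le_rfl, hpE_le, ?_⟩
    rw [eq_bot_iff]
    rintro x ⟨hxD, y, hyE, rfl⟩
    simpa using hdiv _ hxD y hyE rfl
  obtain ⟨C, -, hCS, hCmax⟩ := zorn_le_nonempty₀ S
    (fun c hcS hc y hy => by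
      refine ⟨sSup c, ⟨?_, ?_, ?_⟩, fun z hz => le_sSup hz⟩
      · exact le_trans (hcS hy).1 (le_sSup hy)
      · exact sSup_le fun z hz => (hcS hz).2.1
      · rw [eq_bot_iff]
        rintro x ⟨hxD, hxs⟩
        obtain ⟨z, hzc, hxz⟩ := (AddSubgroup.mem_sSup_of_directedOn ⟨y, hy⟩
          (hc.directedOn)).1 hxs
        have := (hcS hzc).2.2
        rw [eq_bot_iff] at this
        exact this ⟨hxD, hxz⟩) pE hpES
  obtain ⟨hpEC, hCE, hDC⟩ := hCS
  refine ⟨C, hCE, hDC, ?_⟩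
  apply le_antisymm (sup_le hDE hCE)
  intro a haE
  by_contra ha
  have haDC : a ∉ D ⊔ C := ha
  -- enlarge C by a
  set C' : AddSubgroup A := C ⊔ AddSubgroup.closure {a} with hC'
  have haC' : a ∈ C' := AddSubgroup.mem_sup_right (AddSubgroup.mem_closure_singleton.2 ⟨1, one_zsmul a⟩)
  have hC'S : C' ∈ S := by
    refine ⟨le_trans hpEC le_sup_left, sup_le hCE ((AddSubgroup.closure_le E).2 (by
      simpa using haE)), ?_⟩
    rw [eq_bot_iff]
    intro x hx
    have hxD : x ∈ D := hx.1
    have hxC' : x ∈ C ⊔ AddSubgroup.closure {a} := hx.2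
    rw [AddSubgroup.mem_sup] at hxC'
    obtain ⟨c, hc, z, hz, rfl⟩ := hxC'
    obtain ⟨k, rfl⟩ := AddSubgroup.mem_closure_singleton.1 hz
    have hpa : (p : ℤ) • a ∈ C := hpEC ⟨a, haE, rfl⟩
    by_cases hpk : (p : ℤ) ∣ k
    · obtain ⟨t, rfl⟩ := hpk
      have hka : ((p : ℤ) * t) • a ∈ C := by
        rw [mul_comm, mul_zsmul]
        exact zsmul_mem hpa t
      have hmem : c + ((p : ℤ) * t) • a ∈ D ⊓ C := ⟨hxD, add_mem hc hka⟩
      rw [hDC] at hmem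
      exact hmem
    · exfalso
      have hcop : IsCoprime (p : ℤ) k := by
        rw [(Nat.prime_iff_prime_int.mp hp).coprime_iff_not_dvd]
        exact hpk
      obtain ⟨u, v, huv⟩ := hcop
      have hka : k • a ∈ D ⊔ C := by
        have : k • a = (c + k • a) + (-c) := by abel
        rw [this]
        exact add_mem (AddSubgroup.mem_sup_left hxD) (AddSubgroup.mem_sup_right (neg_mem hc))
      have : a ∈ D ⊔ C := by
        have h1 : a = u • ((p : ℤ) • a) + v • (k • a) := by
          rw [smul_smul, smul_smul, ← add_smul, huv, one_zsmul]
        rw [h1]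
        exact add_mem (zsmul_mem (AddSubgroup.mem_sup_right hpa) u) (zsmul_mem hka v)
      exact haDC this
  have : C' = C := le_antisymm (hCmax hC'S le_sup_left) le_sup_left
  have haC : a ∈ C := this ▸ haC'
  exact haDC (AddSubgroup.mem_sup_right haC)

/-- Main induction: a relatively pure subgroup `B ≤ E` with `n • B = 0`
is a direct summand of `E`. -/
private lemma aux_main {A : Type*} [AddCommGroup A] :
    ∀ n : ℕ, 0 < n → ∀ B E : AddSubgroup A, B ≤ E →
    (∀ (k : ℤ) (b : A), b ∈ B → (∃ a ∈ E, k • a = b) → ∃ b' ∈ B, k • b' = b) →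
    (∀ b ∈ B, (n : ℤ) • b = 0) →
    ∃ C ≤ E, B ⊓ C = ⊥ ∧ B ⊔ C = E := by
  intro n
  induction n using Nat.strong_induction_on with
  | _ n ih =>
  intro hn B E hBE hpure hbound
  rcases eq_or_ne n 1 with rfl | hn1
  · -- B = ⊥
    have hB : B = ⊥ := by
      rw [eq_bot_iff]
      intro b hb
      have := hbound b hb
      simpa using this
    exact ⟨E, le_rfl, by simp [hB], by simp [hB]⟩
  · set p := n.minFac with hp_def
    have hp : p.Prime := Nat.minFac_prime hn1
    set m := n / p with hm_def
    have hpm : p * m = n := Nat.mul_div_cancel' (Nat.minFac_dvd n)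
    have hm_pos : 0 < m := by
      rcases Nat.eq_zero_or_pos m with h | h
      · rw [h, mul_zero] at hpm; omega
      · exact h
    have hm_lt : m < n := by
      rw [← hpm]
      exact lt_mul_of_one_lt_left hm_pos hp.one_lt
    set φ : A →+ A := zsmulHom (p : ℤ) with hφ
    set pB : AddSubgroup A := B.map φ with hpB
    set pE : AddSubgroup A := E.map φ with hpEd
    have hpB_le : pB ≤ pE := AddSubgroup.map_mono hBE
    -- purity of pB in pE
    have hφa : ∀ z : A, φ z = (p : ℤ) • z := fun _ => rfl
    have hpure' : ∀ (k : ℤ) (b : A), b ∈ pB → (∃ a ∈ pE, k • a = b) →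
        ∃ b' ∈ pB, k • b' = b := by
      rintro k x ⟨b, hb, rfl⟩ ⟨-, ⟨a, haE, rfl⟩, hka⟩
      rw [hφa, hφa] at hka
      have hx : (k * p) • a = (p : ℤ) • b := by
        rw [mul_zsmul]; exact hka
      have hxB : (p : ℤ) • b ∈ B := zsmul_mem hb _
      obtain ⟨b', hb', hb'eq⟩ := hpure (k * p) ((p : ℤ) • b) hxB ⟨a, haE, hx⟩
      refine ⟨(p : ℤ) • b', ⟨b', hb', rfl⟩, ?_⟩
      rw [hφa, smul_smul]
      exact hb'eq
    have hbound' : ∀ x ∈ pB, (m : ℤ) • x = 0 := by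
      rintro x ⟨b, hb, rfl⟩
      show (m : ℤ) • φ b = 0
      rw [hφa, smul_smul, ← Int.natCast_mul, mul_comm m p, hpm]
      exact hbound b hb
    obtain ⟨C₁, hC₁le, hC₁inf, hC₁sup⟩ := ih m hm_lt hm_pos pB pE hpB_le hpure' hbound'
    set C' : AddSubgroup A := E ⊓ C₁.comap φ with hC'
    have hC'E : C' ≤ E := inf_le_left
    -- B ⊔ C' = E
    have hBC' : B ⊔ C' = E := by
      apply le_antisymm (sup_le hBE hC'E)
      intro a haE
      have hpa : φ a ∈ pE := ⟨a, haE, rfl⟩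
      rw [← hC₁sup, AddSubgroup.mem_sup] at hpa
      obtain ⟨x, hx, c₁, hc₁, hxc⟩ := hpa
      obtain ⟨b, hb, rfl⟩ := hx
      have hab : a - b ∈ C' := by
        refine AddSubgroup.mem_inf.2 ⟨sub_mem haE (hBE hb), ?_⟩
        show φ (a - b) ∈ C₁
        have h2 : φ (a - b) = c₁ := by
          rw [map_sub, ← hxc]; abel
        rw [h2]; exact hc₁
      rw [AddSubgroup.mem_sup]
      exact ⟨b, hb, a - b, hab, by abel⟩
    -- apply prime case to D := B ⊓ C' inside C'
    have hdiv : ∀ x ∈ B ⊓ C', ∀ y ∈ C', (p : ℤ) • y = x → x = 0 := by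
      intro x hx y hyC' hpy
      have hxB : x ∈ B := (AddSubgroup.mem_inf.1 hx).1
      have hyE : y ∈ E := hC'E hyC'
      obtain ⟨b', hb', hb'eq⟩ := hpure (p : ℤ) x hxB ⟨y, hyE, hpy⟩
      have hxpB : x ∈ pB := ⟨b', hb', hb'eq⟩
      have hxC₁ : x ∈ C₁ := by
        rw [← hpy]
        exact (AddSubgroup.mem_inf.1 hyC').2
      have hxbot : x ∈ pB ⊓ C₁ := AddSubgroup.mem_inf.2 ⟨hxpB, hxC₁⟩
      rw [hC₁inf] at hxbot
      simpa using hxbot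
    obtain ⟨C₂, hC₂le, hC₂inf, hC₂sup⟩ := aux_prime_case p hp (B ⊓ C') C' inf_le_right hdiv
    refine ⟨C₂, le_trans hC₂le hC'E, ?_, ?_⟩
    · rw [eq_bot_iff]
      intro x hx
      have hxB : x ∈ B := (AddSubgroup.mem_inf.1 hx).1
      have hxC₂ : x ∈ C₂ := (AddSubgroup.mem_inf.1 hx).2
      have hxbot : x ∈ (B ⊓ C') ⊓ C₂ :=
        AddSubgroup.mem_inf.2 ⟨AddSubgroup.mem_inf.2 ⟨hxB, hC₂le hxC₂⟩, hxC₂⟩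
      rw [hC₂inf] at hxbot
      exact hxbot
    · apply le_antisymm (sup_le hBE (le_trans hC₂le hC'E))
      rw [← hBC']
      apply sup_le le_sup_left
      rw [← hC₂sup]
      exact sup_le (le_trans inf_le_left le_sup_left) le_sup_right

theorem pure_bounded_subgroup_is_direct_summand
    {A : Type*} [AddCommGroup A] (B : AddSubgroup A)
    (hpure : ∀ (n : ℤ) (b : A), b ∈ B → (∃ a : A, n • a = b) → ∃ b' ∈ B, n • b' = b)
    (hbound : ∃ n : ℕ, 0 < n ∧ ∀ b ∈ B, n • b = 0) :
    ∃ C : AddSubgroup A, IsCompl B C := by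
  obtain ⟨n, hn, hb⟩ := hbound
  obtain ⟨C, -, hinf, hsup⟩ := aux_main n hn B ⊤ le_top
    (fun k b hbB h => by obtain ⟨a, -, hka⟩ := h; exact hpure k b hbB ⟨a, hka⟩)
    (fun b hbB => by rw [natCast_zsmul]; exact hb b hbB)
  exact ⟨C, isCompl_iff.2 ⟨disjoint_iff.2 hinf, codisjoint_iff.2 hsup⟩⟩
end

section
/- Let D be an infinite group and let F = ⊕_{d ∈ D} ℤ/2 be the group of finitely supported functions D → ℤ/2, with D acting on F by translation: (g·f)(g') = f(g'g). Then the semidirect product F ⋊ D has no abelian subgroup of finite index. -/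
/-!
A finite-index subgroup `H` of `F ⋊ D` meets both factors in finite-index, hence infinite,
subgroups. If `H` were abelian, every `g` in `H ∩ D` would fix every `f` in `H ∩ F` under
translation. But a nonzero finitely supported `f` is fixed only by finitely many translations,
since `x₀ * g` must stay in the support of `f` for any `x₀` in it.
-/

namespace Subgroup

variable {G : Type*} [Group G]

instance finiteIndex_comap {G' : Type*} [Group G'] (f : G' →* G) (H : Subgroup G)
    [H.FiniteIndex] : (H.comap f).FiniteIndex := by
  have h := relIndex_comap_ne_zero f (J := H) (K := ⊤)
    (by rw [relIndex_top_right]; exact FiniteIndex.index_ne_zero)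
  rw [comap_top, relIndex_top_right] at h
  exact ⟨h⟩

theorem infinite_of_finiteIndex [Infinite G] (H : Subgroup G) [H.FiniteIndex] : Infinite H :=
  not_finite_iff_infinite.mp fun _ ↦ ((finite_iff_finite_and_finiteIndex H).mpr ⟨‹_›, ‹_›⟩).false

end Subgroup

namespace SemidirectProduct

variable {N G : Type*} [Group N] [Group G] {φ : G →* MulAut N}

theorem aut_eq_of_commute {n : N} {g : G} (h : Commute (inl n : N ⋊[φ] G) (inr g)) :
    φ g n = n :=
  inl_injective <| by rw [inl_aut, ← h.eq, map_inv, mul_inv_cancel_right]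

end SemidirectProduct

theorem Finsupp.finite_setOf_forall_apply_mul_eq {D M : Type*} [Group D] [Zero M]
    {f : D →₀ M} (hf : f ≠ 0) : {g : D | ∀ x, f (x * g) = f x}.Finite := by
  obtain ⟨x₀, hx₀⟩ := Finsupp.support_nonempty_iff.mpr hf
  refine (f.support.finite_toSet.preimage (mul_right_injective x₀).injOn).subset ?_
  intro g hg
  simpa [hg x₀] using hx₀

theorem translation_semidirect_product_not_virtually_abelian
    {D : Type*} [Group D] [Infinite D]
    (φ : D →* MulAut (Multiplicative (D →₀ ZMod 2)))
    (hφ : ∀ (g : D) (f : D →₀ ZMod 2) (x : D),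
      Multiplicative.toAdd (φ g (Multiplicative.ofAdd f)) x = f (x * g)) :
    ¬ ∃ H : Subgroup (Multiplicative (D →₀ ZMod 2) ⋊[φ] D),
        H.FiniteIndex ∧ ∀ a ∈ H, ∀ b ∈ H, a * b = b * a := by
  rintro ⟨H, hH, hcomm⟩
  have hF := (H.comap SemidirectProduct.inl).infinite_of_finiteIndex
  have hD := (H.comap SemidirectProduct.inr).infinite_of_finiteIndex
  obtain ⟨⟨n, hn⟩, hn_ne⟩ := exists_ne (1 : H.comap SemidirectProduct.inl)
  have hf : Multiplicative.toAdd n ≠ 0 := fun h ↦ hn_ne (Subtype.ext h)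
  have hfix : (H.comap SemidirectProduct.inr : Set D) ⊆
      {g | ∀ x, Multiplicative.toAdd n (x * g) = Multiplicative.toAdd n x} := by
    intro g hg x
    rw [← hφ, ofAdd_toAdd, SemidirectProduct.aut_eq_of_commute (hcomm _ hn _ hg)]
  exact Set.infinite_coe_iff.mp hD ((Finsupp.finite_setOf_forall_apply_mul_eq hf).subset hfix)
end
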